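/- arXiv:2305.12135 — 5 statements merged into one kernel-verified Lean document; each statement's English description precedes it below -/
import Mathlib

section
/- Let (p, D, L) be a Hadamard triple on ℝ with p > 1, 0 ∈ D ⊂ ℕ, and 0 ∈ L ⊂ {0, 1, …, p−1}. Then (p, D) satisfies the Double Points Condition (i.e. T_{p,D} = [0,1)) if and only if p > #D. -/
open MeasureTheory Filter Topology Set

noncomputable section

/-- Fourier transform `μ̂(ξ) = ∫ e^{2πixξ} dμ(x)` of a Borel measure on `ℝ`. -/
def ftR (μ : Measure ℝ) (ξ : ℝ) : ℂ :=
  ∫ x, Complex.exp (2 * Real.pi * Complex.I * x * ξ) ∂μ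

/-- `δ̂_D(ξ) = (1/#D) Σ_{d∈D} e^{2πi d ξ}` for a finite digit set `D ⊂ ℤ`. -/
def dHat (D : Finset ℤ) (ξ : ℝ) : ℂ :=
  (D.card : ℂ)⁻¹ * ∑ d ∈ D, Complex.exp (2 * Real.pi * Complex.I * (d : ℝ) * ξ)

/-- `(p, D, L)` is a Hadamard triple on `ℝ`. -/
def IsHadamardTriple (p : ℕ) (D L : Finset ℤ) : Prop :=
  1 < p ∧ D.card = L.card ∧
    ∀ ℓ ∈ L, ∀ ℓ' ∈ L, ℓ ≠ ℓ' →
      ∑ d ∈ D, Complex.exp (2 * Real.pi * Complex.I * (((ℓ - ℓ') * d : ℤ) : ℝ) / (p : ℝ)) = 0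

/-- `p_1 ⋯ p_n` (`p` is 0-indexed, so this is `p 0 * ⋯ * p (n-1)`). -/
def Pprod (p : ℕ → ℕ) (n : ℕ) : ℝ := ∏ i ∈ Finset.range n, (p i : ℝ)

/-- `μ` is the Cantor–Moran measure of `{(p_n, D_n)}`: it is a probability measure whose
Fourier transform is `μ̂(ξ) = ∏_{j=1}^∞ δ̂_{D_j}(ξ/(p_1⋯p_j))`. -/
def IsMoran (p : ℕ → ℕ) (D : ℕ → Finset ℤ) (μ : Measure ℝ) : Prop :=
  IsProbabilityMeasure μ ∧
    ∀ ξ : ℝ, ftR μ ξ = ∏' j : ℕ, dHat (D j) (ξ / Pprod p (j + 1))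

/-- `ν` is the `n`-th tail measure `ν_n`:  a probability measure with Fourier transform
`ν̂_n(ξ) = ∏_{j=1}^∞ δ̂_{D_{n+j}}(ξ/(p_{n+1}⋯p_{n+j}))` (0-indexed here). -/
def IsTail (p : ℕ → ℕ) (D : ℕ → Finset ℤ) (n : ℕ) (ν : Measure ℝ) : Prop :=
  IsProbabilityMeasure ν ∧
    ∀ ξ : ℝ, ftR ν ξ =
      ∏' j : ℕ, dHat (D (n + j)) (ξ / ∏ i ∈ Finset.Ico n (n + j + 1), (p i : ℝ))

/-- The Double Points Condition Set `T_{p,D} ⊆ [0,1)`. -/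
def DPCS (p : ℕ) (D : Finset ℤ) : Set ℝ :=
  {ξ | ξ ∈ Set.Ico (0 : ℝ) 1 ∧ ∃ ℓ₁ ℓ₂ : ℕ, ℓ₁ < p ∧ ℓ₂ < p ∧ ℓ₁ ≠ ℓ₂ ∧
    dHat D ((ξ + ℓ₁) / p) ≠ 0 ∧ dHat D ((ξ + ℓ₂) / p) ≠ 0}

/-- A sequence of measures on `ℝ` is an equi-positive family. -/
def EquiPositive (ν : ℕ → Measure ℝ) : Prop :=
  ∃ ε > 0, ∀ x ∈ Set.Ico (0 : ℝ) 1, ∀ k : ℕ, ∃ m : ℤ,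
    ε < ‖ftR (ν k) (x + m)‖

/-- The exponential `x ↦ e^{2πiλx}`. -/
def expL (lam : ℝ) : ℝ → ℂ := fun x => Complex.exp (2 * Real.pi * Complex.I * lam * x)

/-- `Λ` is a spectrum of `μ`: the exponentials `{e^{2πiλx} : λ ∈ Λ}` form an orthonormal
basis (orthonormal with dense span) of `L²(μ)`. -/
def IsSpectrum (μ : Measure ℝ) (Λ : Set ℝ) : Prop :=
  Λ.Countable ∧
    ∃ h : ∀ lam : Λ, MemLp (expL lam) 2 μ,
      Orthonormal ℂ (fun lam : Λ => (h lam).toLp (expL lam)) ∧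
      (Submodule.span ℂ
        (Set.range fun lam : Λ => (h lam).toLp (expL lam))).topologicalClosure = ⊤

/-- `μ` is a spectral measure. -/
def IsSpectralMeasure (μ : Measure ℝ) : Prop := ∃ Λ : Set ℝ, IsSpectrum μ Λ

/-- The integral periodic zero set `Z(μ) = {ξ ∈ [0,1) : μ̂(ξ+k) = 0 ∀ k ∈ ℤ}`. -/
def ZR (μ : Measure ℝ) : Set ℝ :=
  {ξ | ξ ∈ Set.Ico (0 : ℝ) 1 ∧ ∀ k : ℤ, ftR μ (ξ + k) = 0}

/-- Weak convergence of measures on `ℝ` (tested against continuous functions with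
compact support). -/
def WeakConvR (μn : ℕ → Measure ℝ) (μ : Measure ℝ) : Prop :=
  ∀ f : C(ℝ, ℝ), HasCompactSupport f →
    Tendsto (fun n => ∫ x, f x ∂(μn n)) atTop (nhds (∫ x, f x ∂μ))

end

/-!
The digits of a Hadamard triple are distinct modulo `p`: the rows of the matrix
`(e^{2πiℓd/p})_{ℓ∈L, d∈D}` are orthogonal, hence (the matrix being square) so are its columns,
and two digits congruent modulo `p` would give equal columns. So `#D ≤ p`.
If `#D = p`, then `D` is a complete residue system and `δ̂_D(ℓ/p) = 0` for `ℓ ≢ 0 (mod p)`, so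
`ξ = 0` has only the one point `ℓ = 0`. If `#D < p`, then `0` is the only digit divisible by `p`,
so `∑_{ℓ<p} δ̂_D((ξ+ℓ)/p) = p/#D > 1`, while each term has modulus at most `1`: at least two
terms are nonzero.
-/

open Finset

namespace ZMod

variable {p : ℕ} [NeZero p]

theorem sum_range_stdAddChar_mul (k : ZMod p) :
    ∑ ℓ ∈ range p, stdAddChar (k * (ℓ : ZMod p)) = if k = 0 then (p : ℂ) else 0 := by
  split_ifs with hk
  · simp [hk]
  have hne : stdAddChar k ≠ 1 := by
    rwa [← AddChar.map_zero_eq_one (stdAddChar (N := p)), injective_stdAddChar.ne_iff]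
  have hpow : stdAddChar k ^ p = 1 := by
    rw [← AddChar.map_nsmul_eq_pow, nsmul_eq_mul, natCast_self, zero_mul,
      AddChar.map_zero_eq_one]
  simp_rw [mul_comm k, ← nsmul_eq_mul, AddChar.map_nsmul_eq_pow]
  rw [geom_sum_eq hne, hpow, sub_self, zero_div]

end ZMod

theorem norm_dHat_le_one (D : Finset ℤ) (ξ : ℝ) : ‖dHat D ξ‖ ≤ 1 := by
  have hunit : ∀ d : ℤ, ‖Complex.exp (2 * Real.pi * Complex.I * (d : ℝ) * ξ)‖ = 1 := fun d => by
    rw [show 2 * Real.pi * Complex.I * (d : ℝ) * ξ = ((2 * Real.pi * d * ξ : ℝ) : ℂ) * Complex.I by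
      push_cast; ring, Complex.norm_exp_ofReal_mul_I]
  calc ‖dHat D ξ‖
      ≤ (D.card : ℝ)⁻¹ * ∑ d ∈ D, ‖Complex.exp (2 * Real.pi * Complex.I * (d : ℝ) * ξ)‖ := by
        rw [dHat, norm_mul, norm_inv, Complex.norm_natCast]
        gcongr
        exact norm_sum_le _ _
    _ ≤ 1 := by
        simp only [hunit, sum_const, nsmul_eq_mul, mul_one]
        exact inv_mul_le_one_of_le₀ le_rfl (Nat.cast_nonneg _)

theorem dHat_add_natCast_div (p : ℕ) [NeZero p] (D : Finset ℤ) (ξ : ℝ) (ℓ : ℕ) :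
    dHat D ((ξ + ℓ) / p) = (D.card : ℂ)⁻¹ * ∑ d ∈ D,
      Complex.exp (2 * Real.pi * Complex.I * (d : ℝ) * (ξ / p : ℝ)) *
        ZMod.stdAddChar ((d : ZMod p) * (ℓ : ZMod p)) := by
  have hp : (p : ℂ) ≠ 0 := NeZero.ne _
  refine congrArg _ (sum_congr rfl fun d _ => ?_)
  rw [show (d : ZMod p) * (ℓ : ZMod p) = ((d * ℓ : ℤ) : ZMod p) by push_cast; rfl,
    ZMod.stdAddChar_coe, ← Complex.exp_add]
  congr 1
  push_cast
  field_simp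

theorem Finset.exists_pair_ne_zero_of_one_lt_norm_sum {ι E : Type*} [SeminormedAddCommGroup E]
    {s : Finset ι} {f : ι → E} (hf : ∀ i ∈ s, ‖f i‖ ≤ 1) (hsum : 1 < ‖∑ i ∈ s, f i‖) :
    ∃ i ∈ s, ∃ j ∈ s, i ≠ j ∧ f i ≠ 0 ∧ f j ≠ 0 := by
  classical
  by_contra! h
  obtain ⟨i, hi, hfi⟩ : ∃ i ∈ s, f i ≠ 0 := by
    by_contra! h0
    rw [sum_eq_zero h0, norm_zero] at hsum
    exact zero_le_one.not_gt hsum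
  rw [sum_eq_single_of_mem i hi fun j hj hji => h i hi j hj hji.symm hfi] at hsum
  exact (hf i hi).not_gt hsum

namespace IsHadamardTriple

variable {p : ℕ} {D L : Finset ℤ}

theorem sum_stdAddChar [NeZero p] (h : IsHadamardTriple p D L) {ℓ ℓ' : ℤ} (hℓ : ℓ ∈ L)
    (hℓ' : ℓ' ∈ L) :
    ∑ d ∈ D, ZMod.stdAddChar (((ℓ : ZMod p) - (ℓ' : ZMod p)) * (d : ZMod p)) =
      if ℓ = ℓ' then (D.card : ℂ) else 0 := by
  split_ifs with hll
  · simp [hll]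
  rw [← h.2.2 ℓ hℓ ℓ' hℓ' hll]
  refine sum_congr rfl fun d _ => ?_
  rw [show ((ℓ : ZMod p) - (ℓ' : ZMod p)) * (d : ZMod p) = (((ℓ - ℓ') * d : ℤ) : ZMod p) by
    push_cast; rfl, ZMod.stdAddChar_coe, Complex.ofReal_intCast, Complex.ofReal_natCast]

theorem injOn_intCast (h : IsHadamardTriple p D L) : Set.InjOn (Int.cast : ℤ → ZMod p) D := by
  have : NeZero p := ⟨by have := h.1; omega⟩
  intro d hd d' hd' hdd'
  by_contra hne
  have hD : (D.card : ℂ) ≠ 0 := Nat.cast_ne_zero.2 (card_ne_zero_of_mem hd)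
  let A : Matrix L D ℂ := .of fun ℓ d => ZMod.stdAddChar ((ℓ.1 : ZMod p) * (d.1 : ZMod p))
  let B : Matrix D L ℂ := .of fun d ℓ =>
    (D.card : ℂ)⁻¹ * ZMod.stdAddChar (-(ℓ.1 : ZMod p) * (d.1 : ZMod p))
  have hAB : A * B = 1 := by
    ext ℓ ℓ'
    simp only [A, B, Matrix.mul_apply, Matrix.of_apply, mul_left_comm _ (D.card : ℂ)⁻¹,
      ← AddChar.map_add_eq_mul, ← mul_sum, ← add_mul, ← sub_eq_add_neg]
    rw [sum_coe_sort D fun x =>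
        ZMod.stdAddChar (((ℓ.1 : ZMod p) - (ℓ'.1 : ZMod p)) * (x : ZMod p)),
      h.sum_stdAddChar ℓ.2 ℓ'.2, Matrix.one_apply]
    by_cases hll : ℓ = ℓ'
    · rw [if_pos (congrArg Subtype.val hll), if_pos hll, inv_mul_cancel₀ hD]
    · rw [if_neg (Subtype.val_injective.ne hll), if_neg hll, mul_zero]
  have hBA : B * A = 1 :=
    (Matrix.mul_eq_one_comm_of_equiv (Fintype.equivOfCardEq (by simp [h.2.1]))).1 hAB
  have hentry := congr_fun (congr_fun hBA ⟨d, hd⟩) ⟨d', hd'⟩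
  simp only [A, B, Matrix.mul_apply, Matrix.of_apply, mul_assoc, ← AddChar.map_add_eq_mul,
    ← hdd', neg_mul, neg_add_cancel, AddChar.map_zero_eq_one, mul_one, sum_const, card_univ,
    Fintype.card_coe, ← h.2.1, nsmul_eq_mul, mul_inv_cancel₀ hD] at hentry
  rw [Matrix.one_apply_ne (by simpa using hne)] at hentry
  exact one_ne_zero hentry

theorem card_le (h : IsHadamardTriple p D L) : D.card ≤ p := by
  have : NeZero p := ⟨by have := h.1; omega⟩
  simpa using card_le_card_of_injOn _ (fun _ _ => mem_univ _) h.injOn_intCast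

end IsHadamardTriple

section ResidueSystem

variable {p : ℕ} [NeZero p] {D : Finset ℤ}

theorem sum_range_dHat_add_natCast_div (hinj : Set.InjOn (Int.cast : ℤ → ZMod p) D)
    (hD0 : (0 : ℤ) ∈ D) (ξ : ℝ) :
    ∑ ℓ ∈ range p, dHat D ((ξ + ℓ) / p) = p / D.card := by
  have hzero : ∀ d ∈ D, ((d : ZMod p) = 0 ↔ d = 0) := fun d hd =>
    ⟨fun h0 => hinj hd hD0 (by simpa using h0), fun h0 => by simp [h0]⟩
  simp_rw [dHat_add_natCast_div, ← mul_sum]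
  rw [sum_comm]
  simp_rw [← mul_sum, ZMod.sum_range_stdAddChar_mul]
  rw [sum_congr rfl fun d hd => by rw [if_congr (hzero d hd) rfl rfl, mul_ite, mul_zero],
    sum_ite_eq' D (0 : ℤ), if_pos hD0]
  simp [div_eq_inv_mul]

theorem dHat_natCast_div_eq_zero (hinj : Set.InjOn (Int.cast : ℤ → ZMod p) D)
    (hcard : D.card = p) {ℓ : ℕ} (hℓ : (ℓ : ZMod p) ≠ 0) : dHat D (ℓ / p) = 0 := by
  classical
  have himage : D.image (Int.cast : ℤ → ZMod p) = Finset.univ :=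
    eq_univ_of_card _ (by rw [card_image_of_injOn hinj, hcard, ZMod.card])
  have := dHat_add_natCast_div p D 0 ℓ
  simp only [zero_add, zero_div, Complex.ofReal_zero, mul_zero, Complex.exp_zero, one_mul] at this
  rw [this, ← sum_image (f := fun x : ZMod p => ZMod.stdAddChar (x * (ℓ : ZMod p))) hinj, himage,
    AddChar.sum_mulShift _ (ZMod.isPrimitive_stdAddChar p), if_neg hℓ, Nat.cast_zero, mul_zero]

end ResidueSystem

theorem statement3_general
    (p : ℕ) (D L : Finset ℤ)
    (hHad : IsHadamardTriple p D L)
    (hD0 : (0 : ℤ) ∈ D) :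
    DPCS p D = Set.Ico (0 : ℝ) 1 ↔ D.card < p := by
  have hp : 1 < p := hHad.1
  have : NeZero p := ⟨by omega⟩
  have hinj := hHad.injOn_intCast
  constructor
  · intro hDPC
    obtain ⟨-, ℓ₁, ℓ₂, h₁, h₂, hne, hz₁, hz₂⟩ : (0 : ℝ) ∈ DPCS p D := hDPC ▸ ⟨le_rfl, one_pos⟩
    refine hHad.card_le.lt_of_ne fun hcard => ?_
    have hvanish : ∀ ℓ : ℕ, 0 < ℓ → ℓ < p → dHat D ((0 + ℓ) / p) = 0 := fun ℓ hℓ₀ hℓp => by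
      rw [zero_add]
      refine dHat_natCast_div_eq_zero hinj hcard ?_
      rw [Ne, ZMod.natCast_eq_zero_iff]
      exact Nat.not_dvd_of_pos_of_lt hℓ₀ hℓp
    rcases Nat.eq_zero_or_pos ℓ₁ with rfl | hℓ₁
    · exact hz₂ (hvanish ℓ₂ (Nat.pos_of_ne_zero hne.symm) h₂)
    · exact hz₁ (hvanish ℓ₁ hℓ₁ h₁)
  · intro hlt
    refine Set.Subset.antisymm (fun ξ hξ => hξ.1) fun ξ hξ => ⟨hξ, ?_⟩
    have hD : (0 : ℝ) < D.card := Nat.cast_pos.2 (card_pos.2 ⟨0, hD0⟩)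
    obtain ⟨ℓ₁, h₁, ℓ₂, h₂, hne, hz₁, hz₂⟩ :=
      exists_pair_ne_zero_of_one_lt_norm_sum (s := range p)
        (fun ℓ _ => norm_dHat_le_one D ((ξ + ℓ) / p))
        (by rwa [sum_range_dHat_add_natCast_div hinj hD0 ξ, norm_div, Complex.norm_natCast,
          Complex.norm_natCast, one_lt_div hD, Nat.cast_lt])
    exact ⟨ℓ₁, ℓ₂, mem_range.1 h₁, mem_range.1 h₂, hne, hz₁, hz₂⟩

/-- Lemma 3.2.  For a Hadamard triple `(p, D, L)` on `ℝ` with `0 ∈ D ⊂ ℕ`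
and `0 ∈ L ⊆ {0,1,…,p−1}`, the pair `(p, D)` satisfies the Double Points Condition
(`T_{p,D} = [0,1)`) iff `p > #D`. -/
theorem statement3
    (p : ℕ) (D L : Finset ℤ)
    (hHad : IsHadamardTriple p D L)
    (hD0 : (0 : ℤ) ∈ D) (hDpos : ∀ d ∈ D, 0 ≤ d)
    (hL0 : (0 : ℤ) ∈ L) (hL : ∀ ℓ ∈ L, 0 ≤ ℓ ∧ ℓ < (p : ℤ)) :
    DPCS p D = Set.Ico (0 : ℝ) 1 ↔ D.card < p :=
  statement3_general p D L hHad hD0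
end

section
/- Let (p, D, L) be a Hadamard triple on ℝ with p > 1, 0 ∈ D ⊂ ℕ, and p = #D. Then the Double Points Condition Set of (p, D) equals T_{p,D} = [0,1) \ (1/gcd D)ℤ, where gcd D is the greatest common divisor of the nonzero elements of D. (In particular, gcd(gcd D, p) = 1.) -/
open MeasureTheory Filter Topology Set

/-!
The Hadamard matrix of `(p, D, L)` is square, so its columns are orthogonal as well as its rows;
columns indexed by digits congruent mod `p` would coincide, hence `D` is a complete residue
system mod `p`. Parseval over `ℤ/p` then makes `ℓ ↦ |δ̂_D((ξ + ℓ)/p)|²` (`0 ≤ ℓ < p`) a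
probability vector, so `ξ` fails the double points condition exactly when one term has modulus
`1`. As `0 ∈ D`, strict convexity of the disc gives `|δ̂_D(x)| = 1` iff `d x ∈ ℤ` for all
`d ∈ D`, i.e. iff `(gcd D) x ∈ ℤ`. The residue `1` occurs in `D`, so `gcd D` is prime to `p`,
and `(gcd D)(ξ + ℓ)/p ∈ ℤ` for some `ℓ` iff `ξ ∈ (1/gcd D)ℤ`.
-/

namespace DoublePoints

open Finset ComplexConjugate

noncomputable def e (x : ℝ) : ℂ := Complex.exp (2 * Real.pi * Complex.I * x)

lemma e_add (x y : ℝ) : e (x + y) = e x * e y := by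
  rw [e, e, e, ← Complex.exp_add]; push_cast; ring_nf

lemma e_zero : e 0 = 1 := by simp [e]

lemma conj_e (x : ℝ) : conj (e x) = e (-x) := by
  rw [e, e, ← Complex.exp_conj]; simp [map_ofNat]

lemma e_mul_conj_e (x y : ℝ) : e x * conj (e y) = e (x - y) := by
  rw [conj_e, ← e_add, sub_eq_add_neg]

lemma norm_e (x : ℝ) : ‖e x‖ = 1 := by
  rw [e, Complex.norm_exp]; simp

lemma e_pow (x : ℝ) (n : ℕ) : e x ^ n = e (n * x) := by
  rw [e, e, ← Complex.exp_nat_mul]; push_cast; ring_nf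

lemma e_eq_one_iff {x : ℝ} : e x = 1 ↔ ∃ k : ℤ, x = k := by
  rw [e, Complex.exp_eq_one_iff]
  refine exists_congr fun k => ?_
  rw [show 2 * Real.pi * Complex.I * x = (x : ℂ) * (2 * Real.pi * Complex.I) by ring,
    mul_left_inj' (by simp [Real.pi_ne_zero]), ← Complex.ofReal_intCast, Complex.ofReal_inj]

lemma e_intCast (k : ℤ) : e k = 1 := e_eq_one_iff.mpr ⟨k, rfl⟩

lemma exp_eq_e_div (x y : ℝ) :
    Complex.exp (2 * Real.pi * Complex.I * x / y) = e (x / y) := by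
  rw [e, mul_div_assoc]; push_cast; rfl

lemma dHat_eq (D : Finset ℤ) (x : ℝ) : dHat D x = (#D : ℂ)⁻¹ * ∑ d ∈ D, e (d * x) := by
  simp only [dHat, e]
  congr 1
  exact sum_congr rfl fun d _ => by push_cast; ring_nf

lemma sum_range_e_mul_div (p : ℕ) (m : ℤ) :
    ∑ ℓ ∈ range p, e (m * ℓ / p) = if (p : ℤ) ∣ m then (p : ℂ) else 0 := by
  rcases Nat.eq_zero_or_pos p with rfl | hp
  · simp
  have hp' : (p : ℝ) ≠ 0 := by positivity
  split_ifs with h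
  · obtain ⟨k, rfl⟩ := h
    have hterm (ℓ : ℕ) : e ((p * k : ℤ) * ℓ / p) = 1 := by
      rw [show ((p * k : ℤ) : ℝ) * ℓ / p = ((k * ℓ : ℤ) : ℝ) by push_cast; field_simp, e_intCast]
    rw [sum_congr rfl fun ℓ _ => hterm ℓ]
    simp
  · have hne : e (m / p) ≠ 1 := by
      rintro hm
      obtain ⟨k, hk⟩ := e_eq_one_iff.mp hm
      rw [div_eq_iff hp'] at hk
      exact h ⟨k, by rw [mul_comm]; exact_mod_cast hk⟩
    have hterm (ℓ : ℕ) : e (m * ℓ / p) = e (m / p) ^ ℓ := by rw [e_pow]; ring_nf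
    simp only [hterm]
    rw [geom_sum_eq hne, e_pow, mul_div_cancel₀ _ hp', e_intCast, sub_self, zero_div]

theorem sum_range_norm_sum_e_sq {p : ℕ} {D : Finset ℤ}
    (hD : Set.InjOn (Int.cast : ℤ → ZMod p) D) (ξ : ℝ) :
    ∑ ℓ ∈ range p, ‖∑ d ∈ D, e (d * ((ξ + ℓ) / p))‖ ^ 2 = p * #D := by
  have horth : ∀ d ∈ D, ∀ d' ∈ D,
      ∑ ℓ ∈ range p, e (d * ((ξ + ℓ) / p)) * conj (e (d' * ((ξ + ℓ) / p))) =
        if d = d' then (p : ℂ) else 0 := by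
    intro d hd d' hd'
    have hsplit (ℓ : ℕ) : e (d * ((ξ + ℓ) / p)) * conj (e (d' * ((ξ + ℓ) / p))) =
        e ((d - d') * ξ / p) * e ((d - d' : ℤ) * ℓ / p) := by
      rw [e_mul_conj_e, ← e_add]; push_cast; ring_nf
    simp only [hsplit, ← mul_sum, sum_range_e_mul_div]
    by_cases hdd : d = d'
    · simp [hdd, e_zero]
    · have hndvd : ¬ (p : ℤ) ∣ d - d' := fun h =>
        hdd (hD hd hd' ((ZMod.intCast_eq_intCast_iff_dvd_sub _ _ _).mpr
          (by rw [← neg_sub, dvd_neg]; exact h)))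
      simp [hdd, hndvd]
  apply Complex.ofReal_injective
  push_cast
  simp only [← Complex.mul_conj', map_sum, sum_mul_sum]
  rw [sum_comm, sum_congr rfl fun d hd =>
    sum_comm.trans (sum_congr rfl fun d' hd' => horth d hd d' hd')]
  simp [sum_ite_eq, mul_comm]

theorem sum_range_norm_dHat_sq {p : ℕ} [NeZero p] {D : Finset ℤ}
    (hD : Set.InjOn (Int.cast : ℤ → ZMod p) D) (hcard : #D = p) (ξ : ℝ) :
    ∑ ℓ ∈ range p, ‖dHat D ((ξ + ℓ) / p)‖ ^ 2 = 1 := by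
  have hp : (p : ℝ) ≠ 0 := NeZero.ne _
  simp only [dHat_eq, norm_mul, mul_pow, ← mul_sum, sum_range_norm_sum_e_sq hD, hcard, norm_inv,
    Complex.norm_natCast, inv_pow]
  field_simp

theorem injOn_intCast_of_isHadamardTriple {p : ℕ} {D L : Finset ℤ}
    (h : IsHadamardTriple p D L) : Set.InjOn (Int.cast : ℤ → ZMod p) D := by
  obtain ⟨hp, hcard, horth⟩ := h
  intro d hd d' hd' hdd'
  by_contra hne
  let A : Matrix L D ℂ := Matrix.of fun ℓ c => e (ℓ * c / p)
  let B : Matrix D L ℂ := (#D : ℂ)⁻¹ • A.conjTranspose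
  have hAB : A * B = 1 := by
    ext ℓ ℓ'
    have hD : (#D : ℂ) ≠ 0 := by rw [hcard]; exact_mod_cast card_ne_zero_of_mem ℓ.2
    have hterm (c : D) : A ℓ c * B c ℓ' = (#D : ℂ)⁻¹ * e (((ℓ - ℓ' : ℤ) * c : ℤ) / p) := by
      simp only [A, B, Matrix.smul_apply, Matrix.conjTranspose_apply, Matrix.of_apply,
        smul_eq_mul, Complex.star_def]
      rw [mul_left_comm, e_mul_conj_e]; push_cast; ring_nf
    rw [Matrix.mul_apply, sum_congr rfl fun c _ => hterm c, ← mul_sum,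
      sum_coe_sort D fun c => e (((ℓ - ℓ' : ℤ) * c : ℤ) / p)]
    rcases eq_or_ne ℓ ℓ' with rfl | hℓ
    · simp [e_zero, hD]
    · simp only [← exp_eq_e_div]
      rw [horth _ ℓ.2 _ ℓ'.2 (Subtype.coe_injective.ne hℓ)]
      simp [hℓ]
  have hBA : B * A = 1 := (Matrix.mul_eq_one_comm_of_card_eq _ _ _ (by simp [hcard])).mp hAB
  have hD : (#D : ℂ) ≠ 0 := by exact_mod_cast card_ne_zero_of_mem hd
  obtain ⟨k, hk⟩ := (ZMod.intCast_eq_intCast_iff_dvd_sub _ _ _).mp hdd'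
  have hterm (ℓ : L) : B ⟨d, hd⟩ ℓ * A ℓ ⟨d', hd'⟩ = (#D : ℂ)⁻¹ := by
    simp only [A, B, Matrix.smul_apply, Matrix.conjTranspose_apply, Matrix.of_apply,
      smul_eq_mul, Complex.star_def]
    rw [mul_assoc, mul_comm (conj _), e_mul_conj_e,
      show (ℓ * d' / p - ℓ * d / p : ℝ) = ((ℓ * k : ℤ) : ℝ) by
        have : (p : ℝ) ≠ 0 := by positivity
        rw [← sub_div, ← mul_sub, ← Int.cast_sub, hk]; push_cast; field_simp,
      e_intCast, mul_one]
  have hentry := congrFun (congrFun hBA ⟨d, hd⟩) ⟨d', hd'⟩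
  rw [Matrix.mul_apply, sum_congr rfl fun ℓ _ => hterm ℓ,
    Matrix.one_apply_ne (by simpa using hne)] at hentry
  simp [← hcard, hD] at hentry

theorem exists_gcd_mul_eq_intCast_iff (D : Finset ℤ) (x : ℝ) :
    (∃ k : ℤ, ((D.gcd id : ℤ) : ℝ) * x = k) ↔ ∀ d ∈ D, ∃ k : ℤ, d * x = k := by
  refine ⟨fun ⟨k, hk⟩ d hd => ?_, fun h => ?_⟩
  · obtain ⟨c, hc⟩ : D.gcd id ∣ d := gcd_dvd hd
    exact ⟨k * c, by rw [hc]; push_cast; rw [← hk]; ring⟩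
  induction D using Finset.induction_on with
  | empty => exact ⟨0, by simp⟩
  | insert a D _ ih =>
    obtain ⟨k₁, hk₁⟩ := h a (mem_insert_self a D)
    obtain ⟨k₂, hk₂⟩ := ih fun d hd => h d (mem_insert_of_mem hd)
    set g := D.gcd id
    refine ⟨a.gcdA g * k₁ + a.gcdB g * k₂, ?_⟩
    rw [gcd_insert, id_eq, ← Int.coe_gcd, Int.gcd_eq_gcd_ab]
    push_cast
    linear_combination (a.gcdA g : ℝ) * hk₁ + (a.gcdB g : ℝ) * hk₂

theorem norm_dHat_lt_one {D : Finset ℤ} {x : ℝ} {d d' : ℤ} (hd : d ∈ D) (hd' : d' ∈ D)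
    (hne : e (d * x) ≠ e (d' * x)) : ‖dHat D x‖ < 1 := by
  have hD : (0 : ℝ) < #D := by exact_mod_cast card_pos.mpr ⟨d, hd⟩
  have hconvex : dHat D x = ∑ c ∈ D, (#D : ℝ)⁻¹ • e (c * x) := by
    simp [dHat_eq, mul_sum, Complex.real_smul]
  rw [hconvex]
  exact norm_sum_lt_of_strictConvexSpace (fun _ _ => by positivity)
    (by simp [hD.ne']) hd hd' hne (by positivity) (by positivity)
    fun c _ => (norm_e _).le

theorem norm_dHat_lt_one_iff {D : Finset ℤ} (hD0 : 0 ∈ D) (x : ℝ) :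
    ‖dHat D x‖ < 1 ↔ ¬ ∃ k : ℤ, ((D.gcd id : ℤ) : ℝ) * x = k := by
  rw [exists_gcd_mul_eq_intCast_iff]
  constructor
  · intro hlt hint
    have hD : (#D : ℂ) ≠ 0 := by exact_mod_cast card_ne_zero_of_mem hD0
    have h1 : dHat D x = 1 := by
      rw [dHat_eq, sum_congr rfl fun d hd => e_eq_one_iff.mpr (hint d hd)]
      simp [hD]
    simp [h1] at hlt
  · intro hint
    push Not at hint
    obtain ⟨d, hd, hdx⟩ := hint
    refine norm_dHat_lt_one hd hD0 ?_
    rw [Int.cast_zero, zero_mul, e_zero, Ne, e_eq_one_iff]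
    exact fun ⟨k, hk⟩ => hdx k hk

theorem exists_pair_ne_zero_iff_forall_norm_lt_one {ι E : Type*} [NormedAddCommGroup E]
    {s : Finset ι} {f : ι → E} (hmass : ∑ i ∈ s, ‖f i‖ ^ 2 = 1) :
    (∃ i ∈ s, ∃ j ∈ s, i ≠ j ∧ f i ≠ 0 ∧ f j ≠ 0) ↔ ∀ i ∈ s, ‖f i‖ < 1 := by
  constructor
  · rintro ⟨i, hi, j, hj, hij, hfi, hfj⟩ k hk
    obtain ⟨m, hm, hmk, hfm⟩ : ∃ m ∈ s, m ≠ k ∧ f m ≠ 0 := by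
      rcases eq_or_ne i k with rfl | hik
      · exact ⟨j, hj, hij.symm, hfj⟩
      · exact ⟨i, hi, hik, hfi⟩
    have hle := add_le_sum (fun i _ => sq_nonneg ‖f i‖) hk hm hmk.symm
    have hpos : 0 < ‖f m‖ ^ 2 := by positivity
    exact (sq_lt_one_iff₀ (norm_nonneg _)).mp (by linarith)
  · intro hlt
    by_contra! hsingle
    obtain ⟨i, hi, hfi⟩ : ∃ i ∈ s, f i ≠ 0 := by
      by_contra! hzero
      have : ∑ i ∈ s, ‖f i‖ ^ 2 = 0 := sum_eq_zero fun i hi => by simp [hzero i hi]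
      exact zero_ne_one (this.symm.trans hmass)
    rw [sum_eq_single_of_mem i hi fun j hj hji => by simp [hsingle i hi j hj hji.symm hfi]]
      at hmass
    have := hlt i hi
    nlinarith [norm_nonneg (f i)]

theorem exists_lt_dvd_add_mul {p : ℕ} [NeZero p] {g : ℤ} (h : IsCoprime g p) (m : ℤ) :
    ∃ ℓ < p, (p : ℤ) ∣ m + g * ℓ := by
  obtain ⟨a, b, hab⟩ := h
  refine ⟨((-m * a : ℤ) : ZMod p).val, ZMod.val_lt _, ?_⟩
  rw [← ZMod.intCast_zmod_eq_zero_iff_dvd]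
  have hab' : (a : ZMod p) * g = 1 := by simpa using congrArg (Int.cast : ℤ → ZMod p) hab
  push_cast
  rw [ZMod.natCast_zmod_val]
  linear_combination (-(m : ZMod p)) * hab'

theorem exists_lt_gcd_mul_eq_intCast_iff {p : ℕ} [NeZero p] {g : ℤ} (hg : g ≠ 0)
    (h : IsCoprime g p) (ξ : ℝ) :
    (∃ ℓ < p, ∃ k : ℤ, (g : ℝ) * ((ξ + ℓ) / p) = k) ↔ ∃ m : ℤ, ξ = m / g := by
  have hp : (p : ℝ) ≠ 0 := NeZero.ne _
  have hg' : (g : ℝ) ≠ 0 := by exact_mod_cast hg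
  constructor
  · rintro ⟨ℓ, -, k, hk⟩
    refine ⟨k * p - g * ℓ, ?_⟩
    field_simp at hk ⊢
    push_cast
    linarith
  · rintro ⟨m, rfl⟩
    obtain ⟨ℓ, hℓ, k, hk⟩ := exists_lt_dvd_add_mul h m
    refine ⟨ℓ, hℓ, k, ?_⟩
    field_simp
    exact_mod_cast hk

theorem isCoprime_gcd_of_injOn {p : ℕ} [NeZero p] {D : Finset ℤ}
    (hD : Set.InjOn (Int.cast : ℤ → ZMod p) D) (hcard : #D = p) : IsCoprime (D.gcd id) p := by
  have himage : D.image (Int.cast : ℤ → ZMod p) = (univ : Finset (ZMod p)) :=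
    eq_univ_of_card _ (by rw [card_image_of_injOn hD, hcard, ZMod.card])
  obtain ⟨d, hd, hd1⟩ := mem_image.mp (himage ▸ Finset.mem_univ (1 : ZMod p))
  obtain ⟨k, hk⟩ := (ZMod.intCast_eq_intCast_iff_dvd_sub 1 d p).mp (by simpa using hd1.symm)
  exact IsCoprime.of_isCoprime_of_dvd_left ⟨1, -k, by rw [id]; linarith⟩ (gcd_dvd hd)

end DoublePoints

open DoublePoints

theorem statement4_general
    (p : ℕ) (D L : Finset ℤ)
    (hHad : IsHadamardTriple p D L)
    (hD0 : (0 : ℤ) ∈ D)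
    (hpD : p = D.card) :
    DPCS p D =
        Set.Ico (0 : ℝ) 1 \ {x : ℝ | ∃ k : ℤ, x = (k : ℝ) / ((D.gcd id : ℤ) : ℝ)} ∧
      Int.gcd (D.gcd id) (p : ℤ) = 1 := by
  have hp : 1 < p := hHad.1
  have : NeZero p := ⟨by omega⟩
  have hinj := injOn_intCast_of_isHadamardTriple hHad
  have hcop := isCoprime_gcd_of_injOn hinj hpD.symm
  have hg : D.gcd id ≠ 0 := by
    intro hg
    rw [hg, isCoprime_zero_left, Int.isUnit_iff] at hcop
    omega
  refine ⟨?_, Int.isCoprime_iff_gcd_eq_one.mp hcop⟩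
  ext ξ
  have hpair :=
    exists_pair_ne_zero_iff_forall_norm_lt_one (sum_range_norm_dHat_sq hinj hpD.symm ξ)
  simp only [Finset.mem_range, norm_dHat_lt_one_iff hD0] at hpair
  rw [DPCS, Set.mem_ofPred_eq, Set.mem_sdiff, Set.mem_ofPred_eq,
    ← exists_lt_gcd_mul_eq_intCast_iff hg hcop]
  refine and_congr_right fun _ => ?_
  simp only [not_exists, not_and] at hpair ⊢
  rw [← hpair]
  exact ⟨fun ⟨i, j, hi, hj, h⟩ => ⟨i, hi, j, hj, h⟩, fun ⟨i, hi, j, hj, h⟩ => ⟨i, j, hi, hj, h⟩⟩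

/-- Lemma 3.3.  For a Hadamard triple `(p, D, L)` on `ℝ` with `0 ∈ D ⊂ ℕ`
and `p = #D`, the Double Points Condition Set is
`T_{p,D} = [0,1) \ (1/gcd D)ℤ`; in particular `gcd(gcd D, p) = 1`. -/
theorem statement4
    (p : ℕ) (D L : Finset ℤ)
    (hHad : IsHadamardTriple p D L)
    (hD0 : (0 : ℤ) ∈ D) (hDpos : ∀ d ∈ D, 0 ≤ d)
    (hpD : p = D.card) :
    DPCS p D =
        Set.Ico (0 : ℝ) 1 \ {x : ℝ | ∃ k : ℤ, x = (k : ℝ) / ((D.gcd id : ℤ) : ℝ)} ∧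
      Int.gcd (D.gcd id) (p : ℤ) = 1 :=
  statement4_general p D L hHad hD0 hpD
end

section
/- Let {f_n} be a sequence of entire functions on ℂ converging to a function f uniformly on every compact subset of ℂ. For an entire function g, let z(g) denote the number of zeros of g (counted with multiplicity) in the closed unit disk {z ∈ ℂ : |z| ≤ 1} (with z(g) = ∞ if g ≡ 0). If z(f_n) → ∞ as n → ∞, then f ≡ 0. -/
open Filter Topology Metric
open scoped ENNReal

/-!
Fix `w` and `R = ‖w‖ + 3`. Each zero `z₀` of an entire function in the unit disk can be divided
out, `f = (· - z₀) * h`; on the circle `‖x‖ = R` this divides the bound by at least `R - 1`,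
while at `w` the factor `‖w - z₀‖` is at most `‖w‖ + 1`. Together with the maximum modulus
principle, `N` zeros in the disk give `‖f w‖ ≤ q ^ N * sup_{‖x‖ = R} ‖f x‖` with
`q = (‖w‖ + 1) / (R - 1) < 1`. The `f n` are eventually bounded by a common `C` on the circle and
have more and more zeros, so `‖g w‖ = lim ‖f n w‖ ≤ q ^ N * C` for every `N`.
-/

/-- Zeros of `f` in `s` counted with multiplicity; `∞` if `f` vanishes identically near a point
of `s`. -/
noncomputable def zeroCount (f : ℂ → ℂ) (s : Set ℂ) : ℝ≥0∞ :=
  ∑' z : s, (analyticOrderAt f z).toENNReal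

theorem exists_eq_zero_of_zeroCount_ne_zero {f : ℂ → ℂ} {s : Set ℂ} (h : zeroCount f s ≠ 0) :
    ∃ z ∈ s, f z = 0 := by
  obtain ⟨z, hz⟩ := not_forall.mp (mt ENNReal.tsum_eq_zero.mpr h)
  exact ⟨z, z.2, (analyticOrderAt_ne_zero.mp (by simpa using hz)).2⟩

theorem zeroCount_sub_mul {s : Set ℂ} {z₀ : ℂ} (hz₀ : z₀ ∈ s) {h : ℂ → ℂ}
    (hh : AnalyticOnNhd ℂ h s) :
    zeroCount ((· - z₀) * h) s = zeroCount h s + 1 := by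
  have horder : ∀ z : s, (analyticOrderAt ((· - z₀) * h) z).toENNReal =
      (analyticOrderAt h z).toENNReal + if z = ⟨z₀, hz₀⟩ then 1 else 0 := by
    intro z
    rw [analyticOrderAt_mul (by fun_prop) (hh z z.2), add_comm, ENat.toENNReal_add]
    split_ifs with hz
    · simp [hz]
    · simp [analyticOrderAt_id_sub_const_of_ne (Subtype.coe_injective.ne hz)]
  rw [zeroCount, tsum_congr horder, ENNReal.tsum_add, tsum_ite_eq, zeroCount]

theorem Differentiable.exists_eq_sub_mul {f : ℂ → ℂ} (hf : Differentiable ℂ f) {z₀ : ℂ}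
    (h₀ : f z₀ = 0) : ∃ h : ℂ → ℂ, Differentiable ℂ h ∧ f = (· - z₀) * h :=
  ⟨dslope f z₀,
    differentiableOn_univ.mp ((Complex.differentiableOn_dslope univ_mem).mpr hf.differentiableOn),
    funext fun u => (sub_smul_dslope_of_zero h₀ u).symm⟩

theorem Differentiable.norm_le_of_le_zeroCount {r R : ℝ} (hrR : r < R) {w : ℂ} (hw : ‖w‖ ≤ R)
    (N : ℕ) {f : ℂ → ℂ} (hf : Differentiable ℂ f) {C : ℝ}
    (hC : ∀ x ∈ sphere (0 : ℂ) R, ‖f x‖ ≤ C) (hN : (N : ℝ≥0∞) ≤ zeroCount f (closedBall 0 r)) :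
    ‖f w‖ ≤ ((‖w‖ + r) / (R - r)) ^ N * C := by
  induction N generalizing f C with
  | zero =>
    rw [pow_zero, one_mul]
    rcases eq_or_ne R 0 with rfl | hR
    · exact hC w (mem_sphere_zero_iff_norm.mpr (le_antisymm hw (norm_nonneg w)))
    refine Complex.norm_le_of_forall_mem_frontier_norm_le (U := ball 0 R) isBounded_ball
      hf.diffContOnCl (fun x hx => hC x ?_) ?_
    · rwa [frontier_ball _ hR] at hx
    · rwa [closure_ball _ hR, mem_closedBall_zero_iff]
  | succ N ih =>
    obtain ⟨z₀, hz₀, hfz₀⟩ :=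
      exists_eq_zero_of_zeroCount_ne_zero (ne_bot_of_le_ne_bot (by simp) hN)
    obtain ⟨h, hh, rfl⟩ := hf.exists_eq_sub_mul hfz₀
    have hz₀r : ‖z₀‖ ≤ r := mem_closedBall_zero_iff.mp hz₀
    have hRr : 0 < R - r := sub_pos.mpr hrR
    have hhN : (N : ℝ≥0∞) ≤ zeroCount h (closedBall 0 r) := by
      rw [zeroCount_sub_mul hz₀ fun z _ => hh.analyticAt z] at hN
      push_cast at hN
      exact (ENNReal.add_le_add_iff_right ENNReal.one_ne_top).mp hN
    have hhC : ∀ x ∈ sphere (0 : ℂ) R, ‖h x‖ ≤ C / (R - r) := by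
      intro x hx
      have hxz₀ : R - r ≤ ‖x - z₀‖ := by
        have := norm_sub_norm_le x z₀
        rw [mem_sphere_zero_iff_norm.mp hx] at this
        linarith
      have hfx := hC x hx
      rw [Pi.mul_apply, norm_mul] at hfx
      rw [le_div_iff₀ hRr]
      nlinarith [norm_nonneg (h x)]
    have hwz₀ : ‖w - z₀‖ ≤ ‖w‖ + r := (norm_sub_le w z₀).trans (by linarith)
    calc ‖((· - z₀) * h) w‖ = ‖w - z₀‖ * ‖h w‖ := norm_mul _ _
      _ ≤ (‖w‖ + r) * (((‖w‖ + r) / (R - r)) ^ N * (C / (R - r))) :=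
        mul_le_mul hwz₀ (ih hh hhC hhN) (norm_nonneg _) ((norm_nonneg _).trans hwz₀)
      _ = ((‖w‖ + r) / (R - r)) ^ (N + 1) * C := by ring

theorem TendstoUniformlyOn.exists_eventually_norm_le {ι α E : Type*} [TopologicalSpace α]
    [NormedAddCommGroup E] {F : ι → α → E} {f : α → E} {p : Filter ι} {K : Set α}
    (hF : TendstoUniformlyOn F f p K) (hK : IsCompact K) (hf : ContinuousOn f K) :
    ∃ C, ∀ᶠ n in p, ∀ x ∈ K, ‖F n x‖ ≤ C := by
  obtain ⟨C, hC⟩ := hK.exists_bound_of_continuousOn hf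
  refine ⟨C + 1, ?_⟩
  filter_upwards [Metric.tendstoUniformlyOn_iff.mp hF 1 one_pos] with n hn x hx
  have hdist := hn x hx
  rw [dist_comm, dist_eq_norm] at hdist
  linarith [norm_sub_norm_le (F n x) (f x), hC x hx]

/-- Lemma 4.6.  Let `f_n` be entire functions converging to `f`
uniformly on every compact subset of `ℂ`.  If the number of zeros of `f_n` in the closed
unit disk, counted with multiplicity (i.e. the sum of the vanishing orders
`∑_{z ∈ closedBall 0 1} ord_z(f_n)`), tends to `∞`, then `f ≡ 0`. -/
theorem statement11
    (f : ℕ → ℂ → ℂ) (g : ℂ → ℂ)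
    (hf : ∀ n, Differentiable ℂ (f n))
    (hconv : ∀ K : Set ℂ, IsCompact K → TendstoUniformlyOn f g atTop K)
    (hz : ∀ N : ℕ, ∀ᶠ n in atTop,
      (N : ℝ≥0∞) ≤
        ∑' z : closedBall (0 : ℂ) 1, ((analyticOrderAt (f n) z.1).toENNReal)) :
    ∀ z : ℂ, g z = 0 := by
  intro w
  set R : ℝ := ‖w‖ + 3 with hR
  set q : ℝ := (‖w‖ + 1) / (R - 1)
  have hq₀ : 0 ≤ q := div_nonneg (by positivity) (by linarith [norm_nonneg w])
  have hq₁ : q < 1 := (div_lt_one (by linarith [norm_nonneg w])).mpr (by linarith)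
  have hS := isCompact_sphere (0 : ℂ) R
  obtain ⟨C, hC⟩ := (hconv _ hS).exists_eventually_norm_le hS
    ((hconv _ hS).continuousOn (.of_forall fun n => (hf n).continuous.continuousOn))
  have hbound (N : ℕ) : ‖g w‖ ≤ q ^ N * C := by
    refine le_of_tendsto ((hconv {w} isCompact_singleton).tendsto_at rfl).norm ?_
    filter_upwards [hz N, hC] with n hzn hCn
    exact (hf n).norm_le_of_le_zeroCount (by linarith [norm_nonneg w]) (by linarith) N hCn hzn
  have hlim : Tendsto (fun N : ℕ => q ^ N * C) atTop (𝓝 0) := by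
    simpa using (tendsto_pow_atTop_nhds_zero_of_lt_one hq₀ hq₁).mul_const C
  exact norm_le_zero_iff.mp (ge_of_tendsto' hlim hbound)
end

section
/- Let {(p_j, D_j, L_j)}_{j≥1} be a sequence of Hadamard triples on ℝ with p_j > 1, 0 ∈ D_j ⊂ ℕ and sup_j max{d/p_j : d ∈ D_j} < ∞. Fix n ≥ 1 and suppose there is an integer d > 1 such that for every j > n one has p_j = #D_j and d divides every element of D_j. Then the tail measure ν_n satisfies ν̂_n(1/d + k) = 0 for every k ∈ ℤ; that is, 1/d belongs to the integral periodic zero set Z(ν_n). In particular, {ν_n} admits no equi-positive subsequence. -/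
open MeasureTheory Filter Topology Set

/-! For `j ≥ n` write `D_j = d • D'_j`. Since the Hadamard matrix of `(p_j, D_j, L_j)` is square,
`D_j`, and with it `D'_j`, is a complete residue system mod `p_j`. Put `M = 1 + d k ≠ 0` and let
`j` be the level at which `p_n ⋯ p_{n+j-1}` still divides `M` but `p_n ⋯ p_{n+j}` does not. Then
the `j`-th factor of `ν̂_n (1/d + k)` is the average over a complete residue system of a
nontrivial character of `ℤ/p_{n+j}`, hence vanishes. Every `ν_m` with `m ≥ n` satisfies the same
hypothesis, so `1/d ∈ Z(ν_m)`, which no equi-positive family allows. -/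

open Finset ZMod Matrix

lemma ZMod.sum_stdAddChar_mul_eq_zero {p : ℕ} [NeZero p] {ι : Type*} {B : Finset ι}
    {f : ι → ZMod p} (hf : Set.InjOn f B) (hcard : B.card = p) {m : ZMod p} (hm : m ≠ 0) :
    ∑ b ∈ B, stdAddChar (m * f b) = 0 := by
  classical
  rw [← sum_image (f := fun z => stdAddChar (m * z)) hf,
    Finset.eq_univ_of_card (B.image f) (by rw [card_image_of_injOn hf, hcard, ZMod.card])]
  exact AddChar.sum_eq_zero_of_ne_one (isPrimitive_stdAddChar p hm)

lemma ZMod.stdAddChar_sub {p : ℕ} [NeZero p] (x y : ZMod p) :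
    stdAddChar (x - y) = stdAddChar x * star (stdAddChar y) := by
  rw [sub_eq_add_neg, AddChar.map_add_eq_mul, AddChar.map_neg_eq_conj]
  rfl

lemma IsHadamardTriple.sum_stdAddChar_eq_zero {p : ℕ} [NeZero p] {D L : Finset ℤ}
    (hH : IsHadamardTriple p D L) {ℓ ℓ' : ℤ} (hℓ : ℓ ∈ L) (hℓ' : ℓ' ∈ L) (hne : ℓ ≠ ℓ') :
    ∑ a ∈ D, stdAddChar (((ℓ - ℓ') * a : ℤ) : ZMod p) = 0 := by
  rw [← hH.2.2 ℓ hℓ ℓ' hℓ' hne]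
  refine sum_congr rfl fun a _ => ?_
  rw [stdAddChar_coe]
  push_cast
  ring_nf

/-- The rows of the Hadamard matrix are orthogonal, so for `#D = #L = p` its columns are too; two
digits congruent mod `p` would give equal columns. -/
lemma IsHadamardTriple.injOn_intCast_s14 {p : ℕ} {D L : Finset ℤ} (hH : IsHadamardTriple p D L)
    (hcard : D.card = p) : Set.InjOn ((↑) : ℤ → ZMod p) D := by
  have : NeZero p := ⟨by have := hH.1; omega⟩
  let H : Matrix L D ℂ := Matrix.of fun ℓ a => stdAddChar (((ℓ : ℤ) * a : ℤ) : ZMod p)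
  have hp : (p : ℂ) ≠ 0 := Nat.cast_ne_zero.mpr (NeZero.ne p)
  have hrow : H * Hᴴ = (p : ℂ) • 1 := by
    ext ℓ ℓ'
    have hentry : (H * Hᴴ) ℓ ℓ' = ∑ a ∈ D, stdAddChar ((((ℓ : ℤ) - ℓ') * a : ℤ) : ZMod p) := by
      rw [Matrix.mul_apply, ← Finset.sum_coe_sort D]
      refine sum_congr rfl fun a _ => ?_
      simp only [conjTranspose_apply, of_apply, H, ← stdAddChar_sub]
      push_cast; ring_nf
    rcases eq_or_ne ℓ ℓ' with rfl | hne
    · simp [hentry, hcard]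
    · rw [hentry, hH.sum_stdAddChar_eq_zero ℓ.2 ℓ'.2 (Subtype.coe_ne_coe.mpr hne)]
      simp [Matrix.one_apply_ne hne]
  have hcol : Hᴴ * H = (p : ℂ) • 1 := by
    have h1 : H * ((p : ℂ)⁻¹ • Hᴴ) = 1 := by
      rw [Matrix.mul_smul, hrow, smul_smul, inv_mul_cancel₀ hp, one_smul]
    have h2 := (Matrix.mul_eq_one_comm_of_card_eq L D ℂ (by simp [hH.2.1])).mp h1
    rwa [Matrix.smul_mul, inv_smul_eq_iff₀ hp] at h2
  intro a ha a' ha' haa'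
  by_contra hne
  have hentry : (Hᴴ * H) ⟨a, ha⟩ ⟨a', ha'⟩ = p := by
    rw [Matrix.mul_apply]
    have hterm : ∀ ℓ : L, (Hᴴ ⟨a, ha⟩ ℓ) * H ℓ ⟨a', ha'⟩ = 1 := fun ℓ => by
      simp only [conjTranspose_apply, of_apply, H, mul_comm, ← stdAddChar_sub]
      push_cast
      simp [haa']
    rw [Finset.sum_congr rfl fun ℓ _ => hterm ℓ]
    simp [← hH.2.1, hcard]
  rw [hcol, Matrix.smul_apply, one_apply_ne (by simpa using hne), smul_zero] at hentry
  exact hp hentry.symm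

lemma IsHadamardTriple.dHat_eq_zero {p : ℕ} {D L : Finset ℤ} (hH : IsHadamardTriple p D L)
    (hcard : D.card = p) {d : ℤ} (hd : d ≠ 0) (hdvd : ∀ a ∈ D, d ∣ a) {m : ℤ}
    (hm : ¬ (p : ℤ) ∣ m) : dHat D (m / (d * p)) = 0 := by
  have : NeZero p := ⟨by have := hH.1; omega⟩
  have hinj : Set.InjOn (fun a : ℤ => ((a / d : ℤ) : ZMod p)) D := fun a ha a' ha' h => by
    refine hH.injOn_intCast_s14 hcard ha ha' ?_
    rw [← Int.mul_ediv_cancel' (hdvd a ha), ← Int.mul_ediv_cancel' (hdvd a' ha'), Int.cast_mul,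
      Int.cast_mul]
    exact congrArg _ h
  have hm' : (m : ZMod p) ≠ 0 := by rwa [Ne, ZMod.intCast_zmod_eq_zero_iff_dvd]
  have hsum : ∑ a ∈ D, Complex.exp (2 * Real.pi * Complex.I * (a : ℝ) * (m / (d * p) : ℝ)) =
      ∑ a ∈ D, stdAddChar ((m : ZMod p) * ((a / d : ℤ) : ZMod p)) := by
    refine sum_congr rfl fun a ha => ?_
    obtain ⟨b, rfl⟩ := hdvd a ha
    rw [← Int.cast_mul, stdAddChar_coe, Int.mul_ediv_cancel_left b hd]
    congr 1
    push_cast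
    field_simp
  rw [dHat, hsum, sum_stdAddChar_mul_eq_zero hinj hcard hm', mul_zero]

lemma exists_prod_range_dvd_not_dvd {q : ℕ → ℕ} (hq : ∀ i, 1 < q i) {M : ℤ} (hM : M ≠ 0) :
    ∃ j, ((∏ i ∈ range j, q i : ℕ) : ℤ) ∣ M ∧ ¬ ((∏ i ∈ range (j + 1), q i : ℕ) : ℤ) ∣ M := by
  by_contra! hstep
  have hdvd : ∀ j, ((∏ i ∈ range j, q i : ℕ) : ℤ) ∣ M := fun j => by
    induction j with
    | zero => simp
    | succ j ih => exact hstep j ih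
  have hle : ∏ i ∈ range M.natAbs, q i ≤ M.natAbs :=
    Nat.le_of_dvd (Int.natAbs_pos.mpr hM) (Int.natCast_dvd.mp (hdvd M.natAbs))
  have hgrow : 2 ^ M.natAbs ≤ ∏ i ∈ range M.natAbs, q i := by
    simpa using pow_card_le_prod (range M.natAbs) q 2 fun i _ => hq i
  have := M.natAbs.lt_two_pow_self
  omega

theorem IsTail.ftR_one_div_add_intCast_eq_zero {p : ℕ → ℕ} {D L : ℕ → Finset ℤ}
    {n : ℕ} {ν : Measure ℝ} (hν : IsTail p D n ν)
    (hHad : ∀ j, n ≤ j → IsHadamardTriple (p j) (D j) (L j)) {d : ℤ} (hd : 1 < d)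
    (h : ∀ j, n ≤ j → (p j : ℤ) = (D j).card ∧ ∀ a ∈ D j, d ∣ a) (k : ℤ) :
    ftR ν (1 / d + k) = 0 := by
  have hM : 1 + d * k ≠ 0 := fun h0 => by
    have := Int.le_of_dvd one_pos (show d ∣ 1 from ⟨-k, by linear_combination h0⟩)
    omega
  obtain ⟨j, ⟨m, hm⟩, hnot⟩ :=
    exists_prod_range_dvd_not_dvd (q := fun i => p (n + i)) (fun i => (hHad _ (by omega)).1) hM
  have hpm : ¬ (p (n + j) : ℤ) ∣ m := fun hdvd => hnot <| by
    rw [prod_range_succ, Nat.cast_mul, hm]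
    exact mul_dvd_mul_left _ hdvd
  have harg : (1 / d + k) / ∏ i ∈ Ico n (n + j + 1), (p i : ℝ) = m / (d * p (n + j)) := by
    have hMr : (1 : ℝ) + d * k = (∏ i ∈ range j, (p (n + i) : ℝ)) * m := by exact_mod_cast hm
    have hd0 : (d : ℝ) ≠ 0 := by exact_mod_cast (show d ≠ 0 by omega)
    have hp0 : ∀ i, (p (n + i) : ℝ) ≠ 0 := fun i => by
      exact_mod_cast ((hHad _ (by omega)).1.trans' one_pos).ne'
    have hP0 : ∏ i ∈ range j, (p (n + i) : ℝ) ≠ 0 := prod_ne_zero_iff.mpr fun i _ => hp0 i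
    rw [prod_Ico_eq_prod_range, show n + j + 1 - n = j + 1 by omega, prod_range_succ,
      show (1 / d + k : ℝ) = (∏ i ∈ range j, (p (n + i) : ℝ)) * m / d by rw [← hMr]; field_simp]
    field_simp [hp0 j]
  rw [hν.2]
  refine tprod_of_exists_eq_zero ⟨j, ?_⟩
  obtain ⟨hcard, hdvd⟩ := h (n + j) (by omega)
  rw [harg]
  exact (hHad _ (by omega)).dHat_eq_zero (by exact_mod_cast hcard.symm) (by omega) hdvd hpm

lemma not_equiPositive_of_mem_ZR {μ : ℕ → Measure ℝ} {x : ℝ} {k : ℕ} (hx : x ∈ ZR (μ k)) :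
    ¬ EquiPositive μ := by
  rintro ⟨ε, hε, hpos⟩
  obtain ⟨m, hm⟩ := hpos x hx.1 k
  rw [hx.2 m, norm_zero] at hm
  exact hε.not_gt hm

theorem statement14_general
    (p : ℕ → ℕ) (D L : ℕ → Finset ℤ)
    (hHad : ∀ n, IsHadamardTriple (p n) (D n) (L n))
    (ν : ℕ → Measure ℝ) (hν : ∀ n, IsTail p D n (ν n))
    (n : ℕ) (d : ℤ) (hd : 1 < d)
    (h : ∀ j, n ≤ j → (p j : ℤ) = (D j).card ∧ ∀ a ∈ D j, d ∣ a) :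
    (∀ k : ℤ, ftR (ν n) ((1 : ℝ) / (d : ℝ) + (k : ℝ)) = 0) ∧
      ¬ ∃ nk : ℕ → ℕ, StrictMono nk ∧ EquiPositive (fun k => ν (nk k)) := by
  have hzero : ∀ m, n ≤ m → ∀ k : ℤ, ftR (ν m) (1 / d + k) = 0 := fun m hm =>
    (hν m).ftR_one_div_add_intCast_eq_zero (fun j _ => hHad j) hd fun j hj => h j (hm.trans hj)
  have hd' : (1 : ℝ) < d := by exact_mod_cast hd
  have hmem : (1 : ℝ) / d ∈ Set.Ico 0 1 := ⟨by positivity, (div_lt_one (by positivity)).mpr hd'⟩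
  refine ⟨hzero n le_rfl, ?_⟩
  rintro ⟨nk, hmono, hpos⟩
  exact not_equiPositive_of_mem_ZR (k := n) ⟨hmem, hzero (nk n) hmono.le_apply⟩ hpos

/-- proof of (i) ⇒ (ii) of Theorem 2.1.  Fix `n` and suppose there is an
integer `d > 1` such that, for every tail index `j` of `ν_n`, `p_j = #D_j` and
`d` divides every element of `D_j`.  Then `ν̂_n(1/d + k) = 0` for every `k ∈ ℤ`, i.e.
`1/d ∈ Z(ν_n)`; in particular `{ν_n}` admits no equi-positive subsequence
(0-indexed: `p j`, `D j`, `ν j` stand for `p_{j+1}`, `D_{j+1}`, `ν_j`). -/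
theorem statement14
    (p : ℕ → ℕ) (D L : ℕ → Finset ℤ)
    (hHad : ∀ n, IsHadamardTriple (p n) (D n) (L n))
    (hD0 : ∀ n, (0 : ℤ) ∈ D n)
    (hDpos : ∀ n, ∀ d ∈ D n, 0 ≤ d)
    (hbd : ∃ C : ℝ, ∀ n, ∀ d ∈ D n, (d : ℝ) / (p n : ℝ) ≤ C)
    (ν : ℕ → Measure ℝ) (hν : ∀ n, IsTail p D n (ν n))
    (n : ℕ) (d : ℤ) (hd : 1 < d)
    (h : ∀ j, n ≤ j → (p j : ℤ) = (D j).card ∧ ∀ a ∈ D j, d ∣ a) :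
    (∀ k : ℤ, ftR (ν n) ((1 : ℝ) / (d : ℝ) + (k : ℝ)) = 0) ∧
      ¬ ∃ nk : ℕ → ℕ, StrictMono nk ∧ EquiPositive (fun k => ν (nk k)) :=
  statement14_general p D L hHad ν hν n d hd h
end

section
/- There exist constants C > 0 and β > 0 such that for every real x with |x| > 1 and every y ∈ ℝ, ∏_{j=1}^∞ (1/3)|1 + e^{2πi·2y/9^j} + e^{2πi(4/9)^j x}| ≤ C (ln|x|)^{-β}. -/
/-!
Write `b_j = (4/9)^j x`, so that `9 b_{j+1} = 4 b_j`. If `b_p, …, b_{p+L}` all lie within `1/13`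
of integers `m_p, …, m_{p+L}`, then `9 m_{j+1} - 4 m_j` is an integer of modulus `< 1`, hence `0`,
and `9^L ∣ m_p`; so as soon as `9^L > 2|b_p|` some `b_{p+k}`, `k ≤ L`, is `1/13`-far from `ℤ`.
For such `b` the factor is at most `c = (1 + 2 cos(π/13))/3 < 1`, as `|1 + e^{2πib}| = 2|cos πb|`.
Such a block of length `L ≈ log_9 |b_p|` only shrinks `b` to about `|b_p|^(log 4 / log 9)`, so
starting from `|x|` one passes through `n ≈ log₂ log |x|` disjoint blocks, and the product is at
most `c^n ≈ (log |x|)^(-β)` with `β = log₂ (1/c)`.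
-/

open Complex
open scoped Real

lemma tprod_le_prod_of_mem_Icc {ι : Type*} {f : ι → ℝ} (hf : ∀ i, f i ∈ Set.Icc 0 1)
    (s : Finset ι) : ∏' i, f i ≤ ∏ i ∈ s, f i := by
  have hbdd : BddBelow (Set.range fun t : Finset ι => ∏ i ∈ t, f i) :=
    ⟨0, by rintro _ ⟨t, rfl⟩; exact Finset.prod_nonneg fun i _ => (hf i).1⟩
  have hprod : HasProd f (⨅ t : Finset ι, ∏ i ∈ t, f i) :=
    tendsto_atTop_ciInf
      (Finset.prod_anti_set_of_le_one (fun i => (hf i).1) fun i => (hf i).2) hbdd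
  exact hprod.tprod_eq ▸ ciInf_le hbdd s

lemma tprod_le_pow_card_of_mem_Icc {ι : Type*} {f : ι → ℝ} {c : ℝ}
    (hf : ∀ i, f i ∈ Set.Icc 0 1) (s : Finset ι) (hs : ∀ i ∈ s, f i ≤ c) : ∏' i, f i ≤ c ^ s.card :=
  calc ∏' i, f i ≤ ∏ i ∈ s, f i := tprod_le_prod_of_mem_Icc hf s
    _ ≤ ∏ _i ∈ s, c := Finset.prod_le_prod (fun i _ => (hf i).1) hs
    _ = c ^ s.card := Finset.prod_const c

lemma norm_one_add_exp_two_pi_mul_I (b : ℝ) :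
    ‖1 + exp (2 * π * I * b)‖ = 2 * |Real.cos (π * b)| := by
  have h : 1 + exp (2 * π * I * b) =
      exp ((π * b : ℝ) * I) * ((2 * Real.cos (π * b) : ℝ) : ℂ) := by
    push_cast
    rw [Complex.cos, mul_div_cancel₀ _ two_ne_zero, mul_add, ← exp_add, ← exp_add]
    ring_nf
    rw [exp_zero, add_comm]
  rw [h, norm_mul, norm_exp_ofReal_mul_I, one_mul, Complex.norm_real, Real.norm_eq_abs, abs_mul,
    abs_two]

lemma abs_cos_pi_mul_le {b δ : ℝ} (hδ : 0 ≤ δ) (hb : δ ≤ |b - round b|) :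
    |Real.cos (π * b)| ≤ Real.cos (π * δ) := by
  obtain ⟨hlo, hhi⟩ := abs_le.mp (abs_sub_round b)
  have hperiodic : |Real.cos (π * b)| = Real.cos (π * |b - round b|) := by
    have hcos : Real.cos (π * |b - round b|) = Real.cos (π * (b - round b)) := by
      simpa [abs_mul, abs_of_pos Real.pi_pos] using Real.cos_abs (π * (b - round b))
    rw [hcos, show π * b = π * (b - round b) + round b * π by ring, Real.cos_add_int_mul_pi,
      abs_mul, abs_zpow, abs_neg, abs_one, one_zpow, one_mul]
    exact abs_of_nonneg (Real.cos_nonneg_of_neg_pi_div_two_le_of_le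
      (by nlinarith [Real.pi_pos]) (by nlinarith [Real.pi_pos]))
  rw [hperiodic]
  exact Real.cos_le_cos_of_nonneg_of_le_pi (by positivity)
    (by nlinarith [abs_sub_round b, Real.pi_pos]) (by nlinarith [Real.pi_pos])

lemma norm_exp_two_pi_mul_I (a : ℝ) : ‖exp (2 * π * I * a)‖ = 1 := by
  rw [show 2 * π * I * a = ((2 * π * a : ℝ) : ℂ) * I by push_cast; ring]
  exact norm_exp_ofReal_mul_I _

lemma norm_one_add_exp_add_exp_le (a b : ℝ) :
    ‖1 + exp (2 * π * I * a) + exp (2 * π * I * b)‖ ≤ 1 + 2 * |Real.cos (π * b)| :=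
  calc ‖1 + exp (2 * π * I * a) + exp (2 * π * I * b)‖
      ≤ ‖exp (2 * π * I * a)‖ + ‖1 + exp (2 * π * I * b)‖ := by
        rw [add_right_comm, add_comm _ (exp (2 * π * I * a))]
        exact norm_add_le (exp (2 * π * I * a)) (1 + exp (2 * π * I * b))
    _ = 1 + 2 * |Real.cos (π * b)| := by
        rw [norm_exp_two_pi_mul_I, norm_one_add_exp_two_pi_mul_I]

lemma one_div_three_mul_norm_one_add_exp_add_exp_mem_Icc (a b : ℝ) :
    1 / 3 * ‖1 + exp (2 * π * I * a) + exp (2 * π * I * b)‖ ∈ Set.Icc 0 1 :=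
  ⟨by positivity, by linarith [norm_one_add_exp_add_exp_le a b, Real.abs_cos_le_one (π * b)]⟩

lemma one_div_three_mul_norm_one_add_exp_add_exp_le {a b δ : ℝ} (hδ : 0 ≤ δ)
    (hb : δ ≤ |b - round b|) :
    1 / 3 * ‖1 + exp (2 * π * I * a) + exp (2 * π * I * b)‖ ≤
      (1 + 2 * Real.cos (π * δ)) / 3 := by
  linarith [norm_one_add_exp_add_exp_le a b, abs_cos_pi_mul_le hδ hb]

theorem exists_le_mul_rpow_neg_of_le_pow {c K : ℝ} (hc0 : 0 < c) (hc1 : c < 1) (hK : 0 < K) :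
    ∃ C : ℝ, 0 < C ∧ ∃ β : ℝ, 0 < β ∧ ∀ P r : ℝ, 0 < r → P ≤ 1 →
      (∀ n : ℕ, K * 2 ^ n ≤ r → P ≤ c ^ n) → P ≤ C * r ^ (-β) := by
  set β := -Real.logb 2 c
  have hβ : 0 < β := neg_pos.mpr (Real.logb_neg one_lt_two hc0 hc1)
  have hc : c = 2 ^ (-β) := by rw [neg_neg, Real.rpow_logb two_pos one_lt_two.ne' hc0]
  clear_value β
  have hCr : ∀ r, 0 < r → (2 * K) ^ β * r ^ (-β) = (r / (2 * K)) ^ (-β) := fun r hr => by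
    rw [Real.div_rpow hr.le (by positivity), Real.rpow_neg (by positivity) (x := 2 * K),
      div_inv_eq_mul, mul_comm]
  refine ⟨(2 * K) ^ β, by positivity, β, hβ, fun P r hr hP1 hPc => ?_⟩
  rw [hCr r hr]
  rcases lt_or_ge r (2 * K) with hsmall | hlarge
  · calc P ≤ 1 := hP1
      _ ≤ (r / (2 * K)) ^ (-β) :=
        Real.one_le_rpow_of_pos_of_le_one_of_nonpos (by positivity)
          ((div_le_one (by positivity)).mpr hsmall.le) (neg_nonpos.mpr hβ.le)
  · obtain ⟨n, hn, hn'⟩ := exists_nat_pow_near (x := r / K) (by rw [le_div_iff₀ hK]; linarith)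
      one_lt_two
    calc P ≤ c ^ n := hPc n (by rwa [le_div_iff₀ hK, mul_comm] at hn)
      _ = ((2 : ℝ) ^ n) ^ (-β) := by rw [hc, Real.rpow_pow_comm zero_le_two]
      _ ≤ (r / (2 * K)) ^ (-β) := by
        refine Real.rpow_le_rpow_of_nonpos (by positivity) ?_ (neg_nonpos.mpr hβ.le)
        rw [div_le_iff₀ (by positivity)]
        rw [div_lt_iff₀ hK, pow_succ] at hn'
        linarith

lemma four_mul_round_eq_nine_mul_round {b b' : ℝ} (h : 9 * b' = 4 * b)
    (hb : |b - round b| < 1 / 13) (hb' : |b' - round b'| < 1 / 13) :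
    4 * round b = 9 * round b' := by
  have hsmall : |((9 * round b' - 4 * round b : ℤ) : ℝ)| < 1 := by
    have e : ((9 * round b' - 4 * round b : ℤ) : ℝ) =
        4 * (b - round b) - 9 * (b' - round b') := by
      push_cast; linarith
    rw [e]
    calc |4 * (b - round b) - 9 * (b' - round b')|
        ≤ 4 * |b - round b| + 9 * |b' - round b'| := by
          refine (abs_sub _ _).trans ?_
          rw [abs_mul, abs_mul, abs_of_pos four_pos, abs_of_pos (by norm_num : (0 : ℝ) < 9)]
      _ < 1 := by linarith
  have := Int.abs_lt_one_iff.mp (by exact_mod_cast hsmall)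
  omega

section Orbit

variable {a : ℕ → ℝ}

lemma abs_apply_add (ha : ∀ j, 9 * a (j + 1) = 4 * a j) (p k : ℕ) :
    |a (p + k)| = (4 / 9) ^ k * |a p| := by
  induction k with
  | zero => simp
  | succ k ih =>
    rw [← add_assoc, show a (p + k + 1) = 4 / 9 * a (p + k) by linarith [ha (p + k)], abs_mul,
      ih, pow_succ]
    norm_num
    ring

lemma pow_dvd_round_of_forall_abs_sub_round_lt (ha : ∀ j, 9 * a (j + 1) = 4 * a j) {L p : ℕ}
    (h : ∀ k ≤ L, |a (p + k) - round (a (p + k))| < 1 / 13) : 9 ^ L ∣ round (a p) := by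
  induction L generalizing p with
  | zero => exact one_dvd _
  | succ L ih =>
    have hnext : 9 ^ L ∣ round (a (p + 1)) :=
      ih fun k hk => by simpa [add_right_comm, add_assoc] using h (k + 1) (by omega)
    have hround : 4 * round (a p) = 9 * round (a (p + 1)) :=
      four_mul_round_eq_nine_mul_round (ha p) (by simpa using h 0 (by omega)) (h 1 (by omega))
    have hcop : IsCoprime ((9 : ℤ) ^ (L + 1)) 4 :=
      IsCoprime.pow_left (Int.isCoprime_iff_gcd_eq_one.mpr rfl)
    exact hcop.dvd_of_dvd_mul_left (hround ▸ pow_succ' (9 : ℤ) L ▸ mul_dvd_mul_left 9 hnext)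

lemma exists_le_abs_sub_round_of_lt_pow (ha : ∀ j, 9 * a (j + 1) = 4 * a j) {L p : ℕ}
    (hp : 1 / 13 ≤ |a p|) (hL : 2 * |a p| < 9 ^ L) :
    ∃ k ≤ L, 1 / 13 ≤ |a (p + k) - round (a (p + k))| := by
  by_contra! hnear
  have hdvd := pow_dvd_round_of_forall_abs_sub_round_lt ha hnear
  have hp0 : |a p - round (a p)| < 1 / 13 := by simpa using hnear 0 (Nat.zero_le _)
  have hround0 : round (a p) ≠ 0 := fun h0 => by
    rw [h0, Int.cast_zero, sub_zero] at hp0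
    linarith
  have hpow : (9 : ℝ) ^ L ≤ |(round (a p) : ℝ)| := by
    rw [← Int.cast_abs]
    exact_mod_cast Int.le_of_dvd (abs_pos.mpr hround0) ((dvd_abs _ _).mpr hdvd)
  have := abs_sub_abs_le_abs_sub (round (a p) : ℝ) (a p)
  rw [abs_sub_comm] at this
  linarith

lemma mul_nine_pow_le_four_pow {M N : ℕ} (hM : 8 ≤ M) (hN : 2 * M + 2 ≤ N) :
    162 * 9 ^ M ≤ 4 ^ N := by
  obtain ⟨d, rfl⟩ := Nat.exists_eq_add_of_le hM
  calc 162 * 9 ^ (8 + d) = 162 * 9 ^ 8 * 9 ^ d := by ring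
    _ ≤ 16 * 16 ^ 8 * 16 ^ d :=
        Nat.mul_le_mul (by norm_num) (Nat.pow_le_pow_left (by norm_num) d)
    _ = 4 ^ (2 * (8 + d) + 2) := by rw [pow_add, pow_mul]; ring
    _ ≤ 4 ^ N := Nat.pow_le_pow_right (by norm_num) hN

lemma exists_le_abs_sub_round_and_pow_le_abs (ha : ∀ j, 9 * a (j + 1) = 4 * a j) {M p : ℕ}
    (hM : 8 ≤ M) (hp : (9 : ℝ) ^ (2 * M) ≤ |a p|) :
    ∃ k q, k < q ∧ 1 / 13 ≤ |a (p + k) - round (a (p + k))| ∧ (9 : ℝ) ^ M ≤ |a (p + q)| := by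
  have h1 : (1 : ℝ) ≤ |a p| := (one_le_pow₀ (by norm_num)).trans hp
  obtain ⟨L, hL, hL'⟩ := exists_nat_pow_near (x := 2 * |a p|) (by linarith)
    (by norm_num : (1 : ℝ) < 9)
  obtain ⟨k, hk, hfar⟩ := exists_le_abs_sub_round_of_lt_pow ha (L := L + 1) (by linarith) hL'
  have hML : 2 * M ≤ L := by
    have : (9 : ℝ) ^ (2 * M) < 9 ^ (L + 1) := by linarith
    have := (pow_lt_pow_iff_right₀ (by norm_num)).mp this
    omega
  have harith : (162 : ℝ) * 9 ^ M ≤ 4 ^ (L + 2) := by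
    exact_mod_cast mul_nine_pow_le_four_pow hM (by omega)
  refine ⟨k, L + 2, by omega, hfar, ?_⟩
  rw [abs_apply_add ha]
  calc (9 : ℝ) ^ M ≤ (4 / 9) ^ (L + 2) * 9 ^ L / 2 := by
        rw [div_pow, pow_add 9 L 2]
        field_simp
        linarith
    _ ≤ (4 / 9) ^ (L + 2) * |a p| := by
        rw [mul_div_assoc]
        gcongr
        linarith

theorem exists_finset_card_eq_le_abs_sub_round (ha : ∀ j, 9 * a (j + 1) = 4 * a j) :
    ∀ n p : ℕ, (9 : ℝ) ^ 2 ^ (n + 3) ≤ |a p| →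
      ∃ S : Finset ℕ, S.card = n ∧ ∀ j ∈ S, p ≤ j ∧ 1 / 13 ≤ |a j - round (a j)|
  | 0, _, _ => ⟨∅, rfl, by simp⟩
  | n + 1, p, hp => by
    obtain ⟨k, q, hkq, hfar, hnext⟩ := exists_le_abs_sub_round_and_pow_le_abs ha
      (M := 2 ^ (n + 3)) (Nat.pow_le_pow_right (n := 2) two_pos (by omega : 3 ≤ n + 3))
      (by rwa [← pow_succ'])
    obtain ⟨S, hcard, hS⟩ := exists_finset_card_eq_le_abs_sub_round ha n _ hnext
    have hnotin : p + k ∉ S := fun hmem => by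
      have := (hS _ hmem).1
      omega
    refine ⟨insert (p + k) S, by rw [Finset.card_insert_of_notMem hnotin, hcard], ?_⟩
    intro j hj
    rcases Finset.mem_insert.mp hj with rfl | hjS
    · exact ⟨by omega, hfar⟩
    · exact ⟨by have := (hS j hjS).1; omega, (hS j hjS).2⟩

end Orbit

lemma nine_pow_two_pow_le_of_mul_log_le {x : ℝ} {n : ℕ} (hx : 0 < x)
    (hn : 9 * Real.log 9 * 2 ^ n ≤ Real.log x) : (9 : ℝ) ^ 2 ^ (n + 3) ≤ 4 / 9 * x := by
  have hlog : (9 : ℝ) ^ (9 * 2 ^ n) ≤ x :=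
    (Real.log_le_log_iff (by positivity) hx).mp (by rw [Real.log_pow]; push_cast; linarith)
  have hexp : (9 : ℝ) ^ 2 ^ (n + 3) * 9 ≤ 9 ^ (9 * 2 ^ n) := by
    rw [← pow_succ]
    exact pow_le_pow_right₀ (by norm_num) (by rw [pow_add]; have := n.one_le_two_pow; omega)
  linarith

/-- Claim 1 in the proof of Example 6.1.  There exist constants
`C > 0` and `β > 0` such that for all real `x` with `|x| > 1` and all `y ∈ ℝ`,
`∏_{j=1}^∞ (1/3)|1 + e^{2πi·2y/9ʲ} + e^{2πi(4/9)ʲx}| ≤ C (ln|x|)^{-β}`. -/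
theorem statement19 :
    ∃ C : ℝ, 0 < C ∧ ∃ β : ℝ, 0 < β ∧
      ∀ x y : ℝ, 1 < |x| →
        (∏' j : ℕ, (1 / 3 : ℝ) *
            ‖(1 +
              Complex.exp (2 * Real.pi * Complex.I * ((2 * y / 9 ^ (j + 1) : ℝ) : ℂ)) +
              Complex.exp (2 * Real.pi * Complex.I * (((4 / 9 : ℝ) ^ (j + 1) * x : ℝ) : ℂ)))‖) ≤
          C * Real.log |x| ^ (-β) := by
  have hcos : 0 < Real.cos (π * (1 / 13)) ∧ Real.cos (π * (1 / 13)) < 1 := by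
    refine ⟨Real.cos_pos_of_mem_Ioo ⟨by linarith [Real.pi_pos], by linarith [Real.pi_pos]⟩, ?_⟩
    simpa using Real.cos_lt_cos_of_nonneg_of_le_pi le_rfl (by linarith [Real.pi_pos])
      (by positivity : 0 < π * (1 / 13))
  obtain ⟨C, hC, β, hβ, hdecay⟩ := exists_le_mul_rpow_neg_of_le_pow
    (c := (1 + 2 * Real.cos (π * (1 / 13))) / 3) (by linarith) (by linarith)
    (mul_pos (by norm_num : (0 : ℝ) < 9) (Real.log_pos (by norm_num : (1 : ℝ) < 9)))
  refine ⟨C, hC, β, hβ, fun x y hx => ?_⟩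
  have hf := fun j : ℕ => one_div_three_mul_norm_one_add_exp_add_exp_mem_Icc
    (2 * y / 9 ^ (j + 1)) ((4 / 9 : ℝ) ^ (j + 1) * x)
  refine hdecay _ _ (Real.log_pos hx) (by simpa using tprod_le_prod_of_mem_Icc hf ∅)
    fun n hn => ?_
  have hstart : (9 : ℝ) ^ 2 ^ (n + 3) ≤ |(4 / 9 : ℝ) ^ (0 + 1) * x| := by
    rw [zero_add, pow_one, abs_mul, abs_of_pos (by norm_num : (0 : ℝ) < 4 / 9)]
    exact nine_pow_two_pow_le_of_mul_log_le (by positivity) hn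
  obtain ⟨S, rfl, hS⟩ := exists_finset_card_eq_le_abs_sub_round
    (a := fun j => (4 / 9 : ℝ) ^ (j + 1) * x) (fun j => by ring) n 0 hstart
  exact tprod_le_pow_card_of_mem_Icc hf S fun j hj =>
    one_div_three_mul_norm_one_add_exp_add_exp_le (by norm_num) (hS j hj).2
end
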